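/- Let n ≥ 2 and let α be a composition of n. If n is a power of 2, then the ribbon number r_α is odd. -/

import Mathlib

/-- Permutations of `{1, ..., n}`, modeled as functions `ℕ → ℕ` that restrict to a
bijection of `{1, ..., n}` and fix everything else. -/
def PermsA (n : ℕ) : Set (ℕ → ℕ) :=
  {w | Set.BijOn w (Set.Icc 1 n) (Set.Icc 1 n) ∧ ∀ i ∉ Set.Icc 1 n, w i = i}

/-- The descent set `D(w) = {i ∈ [n-1] : w(i) > w(i+1)}`. -/
def DesA (n : ℕ) (w : ℕ → ℕ) : Set ℕ :=
  {i | 1 ≤ i ∧ i < n ∧ w (i + 1) < w i}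

/-- The descent set `D(α) = {α₁, α₁+α₂, …, α₁+⋯+α_{ℓ-1}}` of a composition `α` of `n`. -/
def DsetA {n : ℕ} (α : Composition n) : Set ℕ :=
  {m | ∃ i, 0 < i ∧ i < α.length ∧ α.sizeUpTo i = m}

/-- The type A ribbon number `r_α = |{w ∈ S_n : D(w) = D(α)}|`. -/
noncomputable def ribbonA {n : ℕ} (α : Composition n) : ℕ :=
  Set.ncard {w ∈ PermsA n | DesA n w = DsetA α}

/-- descent set as a Finset -/
def desF (n : ℕ) (w : ℕ → ℕ) : Finset ℕ :=
  (Finset.Ioo 0 n).filter fun i => w (i + 1) < w i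

lemma coe_desF (n : ℕ) (w : ℕ → ℕ) : (desF n w : Set ℕ) = DesA n w := by
  ext i
  simp only [desF, DesA, Finset.coe_filter, Finset.mem_Ioo, Set.mem_setOf_eq]
  omega

lemma finite_permsA (n : ℕ) : (PermsA n).Finite := by
  have hinj : Set.InjOn (fun (w : ℕ → ℕ) (k : Fin (n+1)) => (⟨min (w ↑k) n, by omega⟩ : Fin (n+1)))
      (PermsA n) := by
    intro w hw w' hw' h
    funext i
    by_cases hi : i ∈ Set.Icc 1 n
    · have h1 : w i ≤ n := (hw.1.mapsTo hi).2
      have h2 : w' i ≤ n := (hw'.1.mapsTo hi).2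
      have hii : i < n + 1 := by exact Nat.lt_succ_of_le hi.2
      have := congrFun h ⟨i, hii⟩
      simp only [Fin.mk.injEq] at this
      rwa [Nat.min_eq_left h1, Nat.min_eq_left h2] at this
    · rw [hw.2 i hi, hw'.2 i hi]
  exact Set.Finite.of_finite_image (Set.toFinite _) hinj

/-- the finset of permutations -/
noncomputable def permsF (n : ℕ) : Finset (ℕ → ℕ) := (finite_permsA n).toFinset

lemma mem_permsF {n : ℕ} {w : ℕ → ℕ} : w ∈ permsF n ↔ w ∈ PermsA n := by
  simp [permsF]

/-- parity lemma for involutions on finsets -/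
lemma card_modEq_of_involution {α : Type*} [DecidableEq α] (f : α → α) :
    ∀ (s : Finset α), (∀ a ∈ s, f a ∈ s) → (∀ a ∈ s, f (f a) = a) →
    s.card ≡ (s.filter fun a => f a = a).card [MOD 2] := by
  intro s
  induction s using Finset.strongInduction with
  | _ s ih =>
    intro hmap hinv
    by_cases hall : ∀ a ∈ s, f a = a
    · rw [Finset.filter_true_of_mem hall]
    · push_neg at hall
      obtain ⟨a, ha, hfa⟩ := hall
      set s' := s \ {a, f a} with hs'
      have hfas : f a ∈ s := hmap a ha
      have hss : s' ⊂ s := by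
        apply Finset.sdiff_ssubset _ (by simp)
        intro x hx
        simp at hx
        rcases hx with rfl | rfl
        exacts [ha, hfas]
      have hmap' : ∀ b ∈ s', f b ∈ s' := by
        intro b hb
        simp only [hs', Finset.mem_sdiff, Finset.mem_insert, Finset.mem_singleton] at hb ⊢
        push_neg at hb ⊢
        refine ⟨hmap b hb.1, ?_, ?_⟩
        · intro h; apply hb.2.2; rw [← h, hinv b hb.1]
        · intro h
          apply hb.2.1
          have := congrArg f h
          rwa [hinv b hb.1, hinv a ha] at this
      have hinv' : ∀ b ∈ s', f (f b) = b := fun b hb => hinv b (Finset.mem_sdiff.1 hb).1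
      have ihs := ih s' hss hmap' hinv'
      have hcard : s.card = s'.card + 2 := by
        have h2 : ({a, f a} : Finset α) ⊆ s := by
          intro x hx; simp at hx; rcases hx with rfl | rfl; exacts [ha, hfas]
        have : ({a, f a} : Finset α).card = 2 := by
          rw [Finset.card_insert_of_notMem (by simpa using (Ne.symm hfa)), Finset.card_singleton]
        have hle : ({a, f a} : Finset α).card ≤ s.card := Finset.card_le_card h2
        rw [hs', Finset.card_sdiff_of_subset h2, this]
        omega
      have hfilt : s.filter (fun a => f a = a) = s'.filter (fun a => f a = a) := by
        ext x
        simp only [Finset.mem_filter, hs', Finset.mem_sdiff, Finset.mem_insert,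
          Finset.mem_singleton]
        push_neg
        constructor
        · rintro ⟨hx, hfx⟩
          refine ⟨⟨hx, ?_, ?_⟩, hfx⟩
          · rintro rfl; exact hfa hfx
          · rintro rfl; apply hfa; rw [← hfx, hinv a ha]
        · rintro ⟨⟨hx, _⟩, hfx⟩; exact ⟨hx, hfx⟩
      rw [hcard, hfilt]
      calc s'.card + 2 ≡ s'.card [MOD 2] := by simp [Nat.ModEq, Nat.add_mod]
        _ ≡ _ [MOD 2] := ihs

section chunk2
variable {n : ℕ} {w : ℕ → ℕ}

/-- no descent at `j` means strict ascent -/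
lemma ascent_of_not_descent (hw : w ∈ PermsA n) {j : ℕ} (hj : 0 < j) (hjn : j < n)
    (h : j ∉ desF n w) : w j < w (j + 1) := by
  have hne : w j ≠ w (j + 1) := fun he => by
    have := hw.1.injOn (by simp [Set.mem_Icc]; omega) (by simp [Set.mem_Icc]; omega) he
    omega
  simp [desF, hj, hjn] at h
  omega

lemma growth (hw : w ∈ PermsA n) {S : Finset ℕ} (hdes : desF n w ⊆ S)
    (hS : ∀ s ∈ S, False) :
    ∀ k i, 1 ≤ i → i + k ≤ n → w i + k ≤ w (i + k) := by
  intro k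
  induction k with
  | zero => intro i _ _; simp
  | succ k ih =>
    intro i hi hik
    have h1 := ih i hi (by omega)
    have h2 : w (i + k) < w (i + k + 1) := by
      apply ascent_of_not_descent hw (by omega) (by omega)
      intro hmem
      exact hS _ (hdes hmem)
    have hrw : i + (k + 1) = i + k + 1 := by omega
    rw [hrw]
    omega

lemma eq_id_of_desF_empty (hw : w ∈ PermsA n) (h : desF n w = ∅) : w = id := by
  have hg := growth hw (S := ∅) (by simp [h]) (by simp)
  have hub : ∀ i ∈ Set.Icc 1 n, w i ≤ i := by
    intro i hi
    simp only [Set.mem_Icc] at hi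
    have := hg (n - i) i hi.1 (by omega)
    have hn' : w (i + (n - i)) ≤ n := by
      have : i + (n - i) = n := by omega
      rw [this]
      exact (hw.1.mapsTo (by simp [Set.mem_Icc]; omega)).2
    omega
  have hlb : ∀ i ∈ Set.Icc 1 n, i ≤ w i := by
    intro i hi
    simp only [Set.mem_Icc] at hi
    have := hg (i - 1) 1 le_rfl (by omega)
    have h1 : 1 ≤ w 1 := (hw.1.mapsTo (by simp [Set.mem_Icc]; omega)).1
    have he : 1 + (i - 1) = i := by omega
    rw [he] at this
    omega
  funext i
  by_cases hi : i ∈ Set.Icc 1 n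
  · exact le_antisymm (hub i hi) (hlb i hi)
  · exact hw.2 i hi

lemma id_mem_permsA : (id : ℕ → ℕ) ∈ PermsA n := ⟨Set.bijOn_id _, fun _ _ => rfl⟩

lemma desF_id : desF n (id : ℕ → ℕ) = ∅ := by
  ext i; simp [desF]

lemma card_X_empty : ((permsF n).filter fun w => desF n w = ∅).card = 1 := by
  rw [Finset.card_eq_one]
  refine ⟨id, ?_⟩
  ext w
  simp only [Finset.mem_filter, Finset.mem_singleton, mem_permsF]
  constructor
  · rintro ⟨h1, h2⟩; exact eq_id_of_desF_empty h1 h2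
  · rintro rfl; exact ⟨id_mem_permsA, desF_id⟩

/-- inclusion: card of X_S as a sum over subsets -/
lemma card_X_eq_sum (S : Finset ℕ) :
    ((permsF n).filter fun w => desF n w ⊆ S).card
      = ∑ T ∈ S.powerset, ((permsF n).filter fun w => desF n w = T).card := by
  rw [Finset.card_eq_sum_card_fiberwise (f := fun w => desF n w)
    (t := S.powerset) (fun w hw => by
      simp only [Finset.mem_coe, Finset.mem_filter] at hw ⊢
      exact Finset.mem_powerset.2 hw.2)]
  apply Finset.sum_congr rfl
  intro T hT
  rw [Finset.filter_filter]
  congr 1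
  apply Finset.filter_congr
  intro w _
  constructor
  · rintro ⟨_, h⟩; exact h
  · rintro rfl; exact ⟨Finset.mem_powerset.1 hT, rfl⟩

lemma odd_iff_zmod {k : ℕ} : Odd k ↔ (k : ZMod 2) = 1 := by
  rw [Nat.odd_iff, ← ZMod.natCast_mod]
  rcases Nat.mod_two_eq_zero_or_one k with h | h <;> rw [h] <;> simp <;> decide

lemma even_iff_zmod {k : ℕ} : Even k ↔ (k : ZMod 2) = 0 := by
  rw [Nat.even_iff, ← ZMod.natCast_mod]
  rcases Nat.mod_two_eq_zero_or_one k with h | h <;> rw [h] <;> simp <;> decide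

end chunk2

section blk

/-- the block index of a position -/
def blk (S : Finset ℕ) (p : ℕ) : ℕ := (S.filter (· < p)).card

lemma blk_succ (S : Finset ℕ) (j : ℕ) :
    blk S (j + 1) = blk S j + (if j ∈ S then 1 else 0) := by
  unfold blk
  by_cases hj : j ∈ S
  · rw [if_pos hj]
    have : S.filter (· < j + 1) = insert j (S.filter (· < j)) := by
      ext s
      simp only [Finset.mem_filter, Finset.mem_insert]
      constructor
      · rintro ⟨hs, hlt⟩
        rcases Nat.lt_succ_iff_lt_or_eq.1 hlt with h | h
        · exact Or.inr ⟨hs, h⟩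
        · exact Or.inl h
      · rintro (rfl | ⟨hs, hlt⟩)
        · exact ⟨hj, Nat.lt_succ_self _⟩
        · exact ⟨hs, by omega⟩
    rw [this, Finset.card_insert_of_notMem (by simp)]
  · rw [if_neg hj]
    have : S.filter (· < j + 1) = S.filter (· < j) := by
      ext s
      simp only [Finset.mem_filter]
      constructor
      · rintro ⟨hs, hlt⟩
        refine ⟨hs, ?_⟩
        rcases Nat.lt_succ_iff_lt_or_eq.1 hlt with h | rfl
        · exact h
        · exact absurd hs hj
      · rintro ⟨hs, hlt⟩; exact ⟨hs, by omega⟩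
    rw [this]
    omega

lemma blk_mono (S : Finset ℕ) : Monotone (blk S) := by
  intro p q hpq
  apply Finset.card_le_card
  intro s hs
  simp only [Finset.mem_filter] at *
  exact ⟨hs.1, by omega⟩

lemma not_mem_of_blk_succ_eq {S : Finset ℕ} {j : ℕ} (h : blk S (j + 1) = blk S j) : j ∉ S := by
  intro hj
  rw [blk_succ, if_pos hj] at h
  omega

lemma blk_succ_eq_of_not_mem {S : Finset ℕ} {j : ℕ} (h : j ∉ S) : blk S (j + 1) = blk S j := by
  rw [blk_succ, if_neg h, Nat.add_zero]

end blk

section invw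
variable {n : ℕ} {w : ℕ → ℕ}

/-- inverse of a permutation -/
noncomputable def invw (n : ℕ) (w : ℕ → ℕ) : ℕ → ℕ := Function.invFunOn w (Set.Icc 1 n)

lemma exists_pre (hw : w ∈ PermsA n) {v : ℕ} (hv : v ∈ Set.Icc 1 n) :
    ∃ p ∈ Set.Icc 1 n, w p = v := by
  rcases hw.1.surjOn hv with ⟨p, hp, rfl⟩
  exact ⟨p, hp, rfl⟩

lemma invw_mem (hw : w ∈ PermsA n) {v : ℕ} (hv : v ∈ Set.Icc 1 n) :
    invw n w v ∈ Set.Icc 1 n :=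
  Function.invFunOn_mem (exists_pre hw hv)

lemma invw_eq (hw : w ∈ PermsA n) {v : ℕ} (hv : v ∈ Set.Icc 1 n) :
    w (invw n w v) = v :=
  Function.invFunOn_eq (exists_pre hw hv)

lemma invw_left (hw : w ∈ PermsA n) {p : ℕ} (hp : p ∈ Set.Icc 1 n) :
    invw n w (w p) = p :=
  hw.1.invOn_invFunOn.1 hp

lemma invw_uniq (hw : w ∈ PermsA n) {p v : ℕ} (hp : p ∈ Set.Icc 1 n) (hv : w p = v) :
    invw n w v = p := by
  subst hv; exact invw_left hw hp

end invw

section spl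
variable {n m : ℕ} {S : Finset ℕ} {w : ℕ → ℕ}

/-- pair `i` (values `2i-1, 2i`) is split between two different blocks -/
def splP (n : ℕ) (S : Finset ℕ) (w : ℕ → ℕ) (i : ℕ) : Prop :=
  blk S (invw n w (2 * i - 1)) ≠ blk S (invw n w (2 * i))

noncomputable instance : DecidablePred (splP n S w) := fun _ => by
  unfold splP; infer_instance

/-- the finset of split pairs -/
noncomputable def spl (n m : ℕ) (S : Finset ℕ) (w : ℕ → ℕ) : Finset ℕ :=
  (Finset.Icc 1 m).filter (splP n S w)

/-- the involution: swap the values of the least split pair -/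
noncomputable def tau (n m : ℕ) (S : Finset ℕ) (w : ℕ → ℕ) : ℕ → ℕ :=
  if h : (spl n m S w).Nonempty then
    ⇑(Equiv.swap (2 * ((spl n m S w).min' h) - 1) (2 * ((spl n m S w).min' h))) ∘ w
  else w

lemma swap_comp_mem_permsA (hw : w ∈ PermsA n) {a b : ℕ} (ha : a ∈ Set.Icc 1 n)
    (hb : b ∈ Set.Icc 1 n) : ⇑(Equiv.swap a b) ∘ w ∈ PermsA n := by
  have hmaps : Set.MapsTo (⇑(Equiv.swap a b)) (Set.Icc 1 n) (Set.Icc 1 n) := by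
    intro x hx
    rcases eq_or_ne x a with rfl | hxa
    · rw [Equiv.swap_apply_left]; exact hb
    rcases eq_or_ne x b with rfl | hxb
    · rw [Equiv.swap_apply_right]; exact ha
    · rw [Equiv.swap_apply_of_ne_of_ne hxa hxb]; exact hx
  have hbij : Set.BijOn (⇑(Equiv.swap a b)) (Set.Icc 1 n) (Set.Icc 1 n) := by
    refine ⟨hmaps, (Equiv.injective _).injOn, ?_⟩
    intro y hy
    exact ⟨Equiv.swap a b y, hmaps hy, Equiv.swap_apply_self _ _ _⟩
  refine ⟨hbij.comp hw.1, ?_⟩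
  intro i hi
  rw [Function.comp_apply, hw.2 i hi,
    Equiv.swap_apply_of_ne_of_ne (fun h => hi (by rw [h]; exact ha)) (fun h => hi (by rw [h]; exact hb))]

/-- swapping two consecutive values not both present preserves strict inequality -/
lemma swap_lt {a b x y : ℕ} (hb : b = a + 1) (hxy : x < y)
    (h : ¬((x = a ∨ x = b) ∧ (y = a ∨ y = b))) :
    Equiv.swap a b x < Equiv.swap a b y := by
  subst hb
  push_neg at h
  rcases eq_or_ne x a with rfl | hxa
  · have hy := h (Or.inl rfl)
    rw [Equiv.swap_apply_left, Equiv.swap_apply_of_ne_of_ne hy.1 hy.2]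
    omega
  rcases eq_or_ne x (a + 1) with rfl | hxb
  · have hy := h (Or.inr rfl)
    rw [Equiv.swap_apply_right, Equiv.swap_apply_of_ne_of_ne hy.1 hy.2]
    omega
  rw [Equiv.swap_apply_of_ne_of_ne hxa hxb]
  rcases eq_or_ne y a with rfl | hya
  · rw [Equiv.swap_apply_left]; omega
  rcases eq_or_ne y (a + 1) with rfl | hyb
  · rw [Equiv.swap_apply_right]; omega
  · rw [Equiv.swap_apply_of_ne_of_ne hya hyb]; exact hxy
end spl

section tauprops
variable {n m : ℕ} {S : Finset ℕ} {w : ℕ → ℕ}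

lemma min_spl_mem (h : (spl n m S w).Nonempty) :
    (spl n m S w).min' h ∈ Finset.Icc 1 m ∧ splP n S w ((spl n m S w).min' h) := by
  have := (spl n m S w).min'_mem h
  unfold spl at this
  rw [Finset.mem_filter] at this
  exact this

lemma pairval_mem (hn : n = 2 * m) {i : ℕ} (hi : i ∈ Finset.Icc 1 m) :
    2 * i - 1 ∈ Set.Icc 1 n ∧ 2 * i ∈ Set.Icc 1 n := by
  rw [Finset.mem_Icc] at hi
  constructor <;> simp only [Set.mem_Icc] <;> omega

lemma invw_swap (hw : w ∈ PermsA n) {a b v : ℕ} (ha : a ∈ Set.Icc 1 n) (hb : b ∈ Set.Icc 1 n)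
    (hv : v ∈ Set.Icc 1 n) :
    invw n (⇑(Equiv.swap a b) ∘ w) v = invw n w (Equiv.swap a b v) := by
  have hw' := swap_comp_mem_permsA hw ha hb
  have hsv : Equiv.swap a b v ∈ Set.Icc 1 n := by
    rcases eq_or_ne v a with rfl | hva
    · rw [Equiv.swap_apply_left]; exact hb
    rcases eq_or_ne v b with rfl | hvb
    · rw [Equiv.swap_apply_right]; exact ha
    · rw [Equiv.swap_apply_of_ne_of_ne hva hvb]; exact hv
  apply invw_uniq hw' (invw_mem hw hsv)
  rw [Function.comp_apply, invw_eq hw hsv, Equiv.swap_apply_self]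

lemma spl_swap (hw : w ∈ PermsA n) (hn : n = 2 * m) {i₀ : ℕ} (hi₀ : i₀ ∈ Finset.Icc 1 m) :
    spl n m S (⇑(Equiv.swap (2 * i₀ - 1) (2 * i₀)) ∘ w) = spl n m S w := by
  obtain ⟨ha, hb⟩ := pairval_mem hn hi₀
  delta spl
  apply Finset.filter_congr
  intro i hi
  obtain ⟨hia, hib⟩ := pairval_mem hn hi
  unfold splP
  rw [invw_swap hw ha hb hia, invw_swap hw ha hb hib]
  rcases eq_or_ne i i₀ with heq | hne'
  · rw [heq, Equiv.swap_apply_left, Equiv.swap_apply_right]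
    exact ne_comm
  · rw [Finset.mem_Icc] at hi hi₀
    rw [Equiv.swap_apply_of_ne_of_ne (a := 2 * i₀ - 1) (b := 2 * i₀) (x := 2 * i - 1)
        (by omega) (by omega),
      Equiv.swap_apply_of_ne_of_ne (a := 2 * i₀ - 1) (b := 2 * i₀) (x := 2 * i)
        (by omega) (by omega)]

lemma tau_perms (hw : w ∈ PermsA n) (hn : n = 2 * m) : tau n m S w ∈ PermsA n := by
  unfold tau
  split_ifs with h
  · obtain ⟨hi₀, -⟩ := min_spl_mem h
    obtain ⟨ha, hb⟩ := pairval_mem hn hi₀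
    exact swap_comp_mem_permsA hw ha hb
  · exact hw

lemma swap_des (hw : w ∈ PermsA n) (hn : n = 2 * m) (hdes : desF n w ⊆ S) {i₀ : ℕ}
    (hi₀ : i₀ ∈ Finset.Icc 1 m) (hsp : splP n S w i₀) :
    desF n (⇑(Equiv.swap (2 * i₀ - 1) (2 * i₀)) ∘ w) ⊆ S := by
  obtain ⟨ha, hb⟩ := pairval_mem hn hi₀
  rw [Finset.mem_Icc] at hi₀
  intro j hj
  by_contra hjS
  simp only [desF, Finset.mem_filter, Finset.mem_Ioo, Function.comp_apply] at hj
  obtain ⟨⟨hj0, hjn⟩, hjlt⟩ := hj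
  have hasc : w j < w (j + 1) := by
    apply ascent_of_not_descent hw hj0 hjn
    intro hmem
    exact hjS (hdes hmem)
  have hjmem : j ∈ Set.Icc 1 n := by simp only [Set.mem_Icc]; omega
  have hj1mem : j + 1 ∈ Set.Icc 1 n := by simp only [Set.mem_Icc]; omega
  have hkey : ¬((w j = 2 * i₀ - 1 ∨ w j = 2 * i₀)
      ∧ (w (j + 1) = 2 * i₀ - 1 ∨ w (j + 1) = 2 * i₀)) := by
    rintro ⟨h1, h2⟩
    have hblk : blk S (j + 1) = blk S j := blk_succ_eq_of_not_mem hjS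
    apply hsp
    unfold splP at *
    rcases h1 with h1 | h1 <;> rcases h2 with h2 | h2
    · omega
    · rw [invw_uniq hw hjmem h1, invw_uniq hw hj1mem h2, hblk]
    · rw [invw_uniq hw hj1mem h2, invw_uniq hw hjmem h1, hblk]
    · omega
  have := swap_lt (a := 2 * i₀ - 1) (b := 2 * i₀) (by omega) hasc hkey
  omega

lemma tau_des (hw : w ∈ PermsA n) (hn : n = 2 * m) (hdes : desF n w ⊆ S) :
    desF n (tau n m S w) ⊆ S := by
  unfold tau
  split_ifs with h
  · obtain ⟨hi₀, hsp⟩ := min_spl_mem h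
    exact swap_des hw hn hdes hi₀ hsp
  · exact hdes

lemma min'_congr {α : Type*} [LinearOrder α] {s t : Finset α} (h : s = t) (hs : s.Nonempty)
    (ht : t.Nonempty) : s.min' hs = t.min' ht := by subst h; rfl

lemma tau_ne (hw : w ∈ PermsA n) (hn : n = 2 * m) (h : (spl n m S w).Nonempty) :
    tau n m S w ≠ w := by
  obtain ⟨hi₀, hsp⟩ := min_spl_mem h
  obtain ⟨ha, hb⟩ := pairval_mem hn hi₀
  rw [Finset.mem_Icc] at hi₀
  intro heq
  have hp1 : invw n w (2 * ((spl n m S w).min' h) - 1) ∈ Set.Icc 1 n := invw_mem hw ha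
  have hv : w (invw n w (2 * ((spl n m S w).min' h) - 1)) = 2 * ((spl n m S w).min' h) - 1 :=
    invw_eq hw ha
  have := congrFun heq (invw n w (2 * ((spl n m S w).min' h) - 1))
  rw [tau, dif_pos h] at this
  rw [Function.comp_apply, hv, Equiv.swap_apply_left] at this
  omega

lemma tau_invol (hw : w ∈ PermsA n) (hn : n = 2 * m) :
    tau n m S (tau n m S w) = w := by
  by_cases h : (spl n m S w).Nonempty
  · obtain ⟨hi₀, hsp⟩ := min_spl_mem h
    have h1 : tau n m S w
        = ⇑(Equiv.swap (2 * ((spl n m S w).min' h) - 1) (2 * ((spl n m S w).min' h))) ∘ w := by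
      rw [tau, dif_pos h]
    have hspl : spl n m S (tau n m S w) = spl n m S w := by
      rw [h1]; exact spl_swap hw hn hi₀
    have hne' : (spl n m S (tau n m S w)).Nonempty := by rw [hspl]; exact h
    have hmin : (spl n m S (tau n m S w)).min' hne' = (spl n m S w).min' h :=
      min'_congr hspl _ _
    rw [tau, dif_pos hne', hmin, h1]
    funext x
    simp [Equiv.swap_apply_self]
  · have h1 : tau n m S w = w := by rw [tau, dif_neg h]
    rw [h1, h1]

lemma tau_fixed_iff (hw : w ∈ PermsA n) (hn : n = 2 * m) :
    tau n m S w = w ↔ spl n m S w = ∅ := by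
  constructor
  · intro heq
    by_contra hne
    exact tau_ne hw hn (Finset.nonempty_of_ne_empty hne) heq
  · intro he
    rw [tau, dif_neg]
    rw [he]
    exact Finset.not_nonempty_empty

lemma card_X_modEq_fix (hn : n = 2 * m) :
    ((permsF n).filter fun w => desF n w ⊆ S).card
      ≡ (((permsF n).filter fun w => desF n w ⊆ S).filter
          fun w => spl n m S w = ∅).card [MOD 2] := by
  classical
  set X := (permsF n).filter fun w => desF n w ⊆ S with hX
  have hmap : ∀ w ∈ X, tau n m S w ∈ X := by
    intro w hwX
    rw [hX, Finset.mem_filter, mem_permsF] at hwX ⊢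
    exact ⟨tau_perms hwX.1 hn, tau_des hwX.1 hn hwX.2⟩
  have hinv : ∀ w ∈ X, tau n m S (tau n m S w) = w := by
    intro w hwX
    rw [hX, Finset.mem_filter, mem_permsF] at hwX
    exact tau_invol hwX.1 hn
  have := card_modEq_of_involution (tau n m S) X hmap hinv
  refine this.trans ?_
  have : X.filter (fun w => tau n m S w = w) = X.filter (fun w => spl n m S w = ∅) := by
    apply Finset.filter_congr
    intro w hwX
    rw [hX, Finset.mem_filter, mem_permsF] at hwX
    exact tau_fixed_iff hwX.1 hn
  rw [this]

end tauprops

section struct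
variable {n m : ℕ} {S : Finset ℕ} {w : ℕ → ℕ}

lemma chain_blk (hw : w ∈ PermsA n) (hdes : desF n w ⊆ S) :
    ∀ k p, 1 ≤ p → p + k ≤ n → blk S p = blk S (p + k) → w p + k ≤ w (p + k) := by
  intro k
  induction k with
  | zero => intro p _ _ _; simp
  | succ k ih =>
    intro p hp hpk hblk
    have hm1 : blk S p ≤ blk S (p + k) := blk_mono S (by omega)
    have hm2 : blk S (p + k) ≤ blk S (p + k + 1) := blk_mono S (by omega)
    have hrw : p + (k + 1) = p + k + 1 := by omega
    rw [hrw] at hblk ⊢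
    have hnotS : p + k ∉ S := not_mem_of_blk_succ_eq (by omega)
    have hasc : w (p + k) < w (p + k + 1) := by
      apply ascent_of_not_descent hw (by omega) (by omega)
      intro hmem
      exact hnotS (hdes hmem)
    have := ih p hp (by omega) (by omega)
    omega

lemma mono_blk (hw : w ∈ PermsA n) (hdes : desF n w ⊆ S) {p q : ℕ} (hp : 1 ≤ p) (hq : q ≤ n)
    (hpq : p < q) (hblk : blk S p = blk S q) : w p < w q := by
  have := chain_blk hw hdes (q - p) p hp (by omega) (by rw [show p + (q - p) = q by omega]; exact hblk)
  rw [show p + (q - p) = q by omega] at this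
  omega

lemma adj_pos (hw : w ∈ PermsA n) (hdes : desF n w ⊆ S) {v : ℕ} (hv : v ∈ Set.Icc 1 n)
    (hv1 : v + 1 ∈ Set.Icc 1 n)
    (hblk : blk S (invw n w v) = blk S (invw n w (v + 1))) :
    invw n w (v + 1) = invw n w v + 1 := by
  set p1 := invw n w v with hp1
  set p2 := invw n w (v + 1) with hp2
  have hp1m : p1 ∈ Set.Icc 1 n := invw_mem hw hv
  have hp2m : p2 ∈ Set.Icc 1 n := invw_mem hw hv1
  have hw1 : w p1 = v := invw_eq hw hv
  have hw2 : w p2 = v + 1 := invw_eq hw hv1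
  simp only [Set.mem_Icc] at hp1m hp2m
  have hlt : p1 < p2 := by
    by_contra hle
    push_neg at hle
    rcases eq_or_lt_of_le hle with heq | hlt'
    · rw [heq] at hw2; omega
    · have := mono_blk hw hdes hp2m.1 hp1m.2 hlt' hblk.symm
      omega
  by_contra hne
  have hlt2 : p1 + 1 < p2 := by
    rcases Nat.lt_or_ge (p1 + 1) p2 with h | h
    · exact h
    · omega
  have hble : blk S p1 ≤ blk S (p1 + 1) := blk_mono S (by omega)
  have hble2 : blk S (p1 + 1) ≤ blk S p2 := blk_mono S (by omega)
  have hbeq1 : blk S p1 = blk S (p1 + 1) := by omega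
  have hbeq2 : blk S (p1 + 1) = blk S p2 := by omega
  have h1 := mono_blk hw hdes hp1m.1 (by omega) (by omega) hbeq1
  have h2 := mono_blk hw hdes (by omega) hp2m.2 hlt2 hbeq2
  omega

lemma struct (hw : w ∈ PermsA n) (hdes : desF n w ⊆ S) (hn : n = 2 * m)
    (hfix : spl n m S w = ∅) :
    ∀ q, 1 ≤ q → q ≤ m → Odd (w (2 * q - 1)) ∧ w (2 * q) = w (2 * q - 1) + 1 := by
  have hnos : ∀ i, 1 ≤ i → i ≤ m →
      blk S (invw n w (2 * i - 1)) = blk S (invw n w (2 * i)) := by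
    intro i h1 h2
    by_contra hne
    have : i ∈ spl n m S w := by
      unfold spl
      rw [Finset.mem_filter, Finset.mem_Icc]
      exact ⟨⟨h1, h2⟩, hne⟩
    rw [hfix] at this
    exact absurd this (Finset.notMem_empty i)
  intro q
  induction q using Nat.strong_induction_on with
  | _ q ih =>
    intro hq1 hqm
    have hq2 : 2 * q - 1 ∈ Set.Icc 1 n := by simp only [Set.mem_Icc]; omega
    have h2q : 2 * q ∈ Set.Icc 1 n := by simp only [Set.mem_Icc]; omega
    set v := w (2 * q - 1) with hv
    have hvmem : v ∈ Set.Icc 1 n := hw.1.mapsTo hq2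
    simp only [Set.mem_Icc] at hvmem
    have hinvv : invw n w v = 2 * q - 1 := invw_left hw hq2
    have hodd : Odd v := by
      rw [Nat.odd_iff]
      by_contra hev
      have hev' : v % 2 = 0 := by omega
      -- v even, v ≥ 2; pair i = v / 2
      have hblk := hnos (v / 2) (by omega) (by omega)
      rw [show 2 * (v / 2) - 1 = v - 1 by omega, show 2 * (v / 2) = v by omega] at hblk
      have hvm1 : v - 1 ∈ Set.Icc 1 n := by simp only [Set.mem_Icc]; omega
      have hadj := adj_pos hw hdes hvm1 (by rw [show v - 1 + 1 = v by omega]; exact (by simp only [Set.mem_Icc]; omega)) (by rw [show v - 1 + 1 = v by omega]; exact hblk)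
      rw [show v - 1 + 1 = v by omega] at hadj
      have hinvm1 : invw n w (v - 1) ∈ Set.Icc 1 n := invw_mem hw hvm1
      simp only [Set.mem_Icc] at hinvm1
      have hq2' : 2 ≤ q := by omega
      have hprev := ih (q - 1) (by omega) (by omega) (by omega)
      have hwvm1 : w (invw n w (v - 1)) = v - 1 := invw_eq hw hvm1
      have hpos : invw n w (v - 1) = 2 * q - 2 := by omega
      rw [hpos] at hwvm1
      rw [show 2 * (q - 1) = 2 * q - 2 by omega, show 2 * q - 2 - 1 = 2 * q - 3 by omega]
        at hprev
      rcases hprev with ⟨hpodd, hpeq⟩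
      rw [Nat.odd_iff] at hpodd
      omega
    -- now the pair i = (v+1)/2
    rw [Nat.odd_iff] at hodd
    have hvlt : v ≤ 2 * m - 1 := by omega
    have hblk := hnos ((v + 1) / 2) (by omega) (by omega)
    rw [show 2 * ((v + 1) / 2) - 1 = v by omega, show 2 * ((v + 1) / 2) = v + 1 by omega]
      at hblk
    have hv1mem : v + 1 ∈ Set.Icc 1 n := by simp only [Set.mem_Icc]; omega
    have hadj := adj_pos hw hdes (by simp only [Set.mem_Icc]; omega) hv1mem hblk
    rw [hinvv] at hadj
    have hweq : w (invw n w (v + 1)) = v + 1 := invw_eq hw hv1mem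
    rw [hadj, show 2 * q - 1 + 1 = 2 * q by omega] at hweq
    exact ⟨by rw [Nat.odd_iff]; exact hodd, hweq⟩

end struct

section fix
variable {n m : ℕ} {S : Finset ℕ} {w : ℕ → ℕ}

lemma fix_empty_of_odd (hS : S ⊆ Finset.Ioo 0 n) (hn : n = 2 * m)
    {s : ℕ} (hsS : s ∈ S) (hsodd : s % 2 = 1) :
    (((permsF n).filter fun w => desF n w ⊆ S).filter fun w => spl n m S w = ∅) = ∅ := by
  rw [Finset.eq_empty_iff_forall_notMem]
  intro w hwmem
  rw [Finset.mem_filter, Finset.mem_filter, mem_permsF] at hwmem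
  obtain ⟨⟨hw, hdes⟩, hfix⟩ := hwmem
  have hsIoo : s ∈ Finset.Ioo 0 n := hS hsS
  rw [Finset.mem_Ioo] at hsIoo
  have hsm : s ≤ 2 * m - 1 := by omega
  set q := (s + 1) / 2 with hq
  have hq1 : 1 ≤ q := by omega
  have hqm : q ≤ m := by omega
  obtain ⟨hodd, heq⟩ := struct hw hdes hn hfix q hq1 hqm
  rw [show 2 * q - 1 = s by omega] at hodd heq
  rw [show 2 * q = s + 1 by omega] at heq
  rw [Nat.odd_iff] at hodd
  have hsmem : s ∈ Set.Icc 1 n := by simp only [Set.mem_Icc]; omega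
  have hs1mem : s + 1 ∈ Set.Icc 1 n := by simp only [Set.mem_Icc]; omega
  have hws : w s ∈ Set.Icc 1 n := hw.1.mapsTo hsmem
  simp only [Set.mem_Icc] at hws
  -- pair i = (w s + 1) / 2 is split
  set i := (w s + 1) / 2 with hi
  have hi1 : 1 ≤ i := by omega
  have him : i ≤ m := by omega
  have hsp : splP n S w i := by
    unfold splP
    rw [show 2 * i - 1 = w s by omega, show 2 * i = w s + 1 by omega]
    rw [invw_uniq hw hsmem rfl, invw_uniq hw hs1mem heq]
    have := blk_succ S s
    rw [if_pos hsS] at this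
    omega
  have : i ∈ spl n m S w := by
    unfold spl
    rw [Finset.mem_filter, Finset.mem_Icc]
    exact ⟨⟨hi1, him⟩, hsp⟩
  rw [hfix] at this
  exact absurd this (Finset.notMem_empty i)

/-- compression map -/
def dn (m : ℕ) (w : ℕ → ℕ) : ℕ → ℕ :=
  fun q => if 1 ≤ q ∧ q ≤ m then (w (2 * q - 1) + 1) / 2 else q

/-- expansion map -/
def up (m : ℕ) (u : ℕ → ℕ) : ℕ → ℕ :=
  fun p => if 1 ≤ p ∧ p ≤ 2 * m then
    (if p % 2 = 1 then 2 * u ((p + 1) / 2) - 1 else 2 * u (p / 2)) else p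

end fix

section bij
variable {m : ℕ} {S : Finset ℕ} {w u : ℕ → ℕ}

lemma up_odd {q : ℕ} (hq1 : 1 ≤ q) (hqm : q ≤ m) : up m u (2 * q - 1) = 2 * u q - 1 := by
  unfold up
  rw [if_pos (by omega : 1 ≤ 2 * q - 1 ∧ 2 * q - 1 ≤ 2 * m),
    if_pos (by omega : (2 * q - 1) % 2 = 1), show (2 * q - 1 + 1) / 2 = q by omega]

lemma up_even {q : ℕ} (hq1 : 1 ≤ q) (hqm : q ≤ m) : up m u (2 * q) = 2 * u q := by
  unfold up
  rw [if_pos (by omega : 1 ≤ 2 * q ∧ 2 * q ≤ 2 * m),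
    if_neg (by omega : ¬((2 * q) % 2 = 1)), show (2 * q) / 2 = q by omega]

lemma dn_apply {q : ℕ} (hq1 : 1 ≤ q) (hqm : q ≤ m) :
    dn m w q = (w (2 * q - 1) + 1) / 2 := by
  unfold dn
  rw [if_pos ⟨hq1, hqm⟩]

/-- forward direction of the bijection -/
lemma dn_mem (hw : w ∈ PermsA (2 * m)) (hdes : desF (2 * m) w ⊆ S)
    (hfix : spl (2 * m) m S w = ∅) :
    dn m w ∈ PermsA m ∧ desF m (dn m w) ⊆ S.image (· / 2) := by
  have hst := struct hw hdes rfl hfix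
  have hval : ∀ q, 1 ≤ q → q ≤ m → w (2 * q - 1) ∈ Set.Icc 1 (2 * m) := by
    intro q h1 h2
    exact hw.1.mapsTo (by simp only [Set.mem_Icc]; omega)
  constructor
  · refine ⟨⟨?_, ?_, ?_⟩, ?_⟩
    · -- MapsTo
      intro q hq
      simp only [Set.mem_Icc] at hq ⊢
      rw [dn_apply hq.1 hq.2]
      have := hval q hq.1 hq.2
      have hodd := (hst q hq.1 hq.2).1
      simp only [Set.mem_Icc] at this
      rw [Nat.odd_iff] at hodd
      omega
    · -- InjOn
      intro q hq q' hq' heq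
      simp only [Set.mem_Icc] at hq hq'
      rw [dn_apply hq.1 hq.2, dn_apply hq'.1 hq'.2] at heq
      have ho1 := (hst q hq.1 hq.2).1
      have ho2 := (hst q' hq'.1 hq'.2).1
      rw [Nat.odd_iff] at ho1 ho2
      have hveq : w (2 * q - 1) = w (2 * q' - 1) := by omega
      have := hw.1.injOn (by simp only [Set.mem_Icc]; omega)
        (by simp only [Set.mem_Icc]; omega) hveq
      omega
    · -- SurjOn
      intro v' hv'
      simp only [Set.mem_Icc] at hv'
      obtain ⟨p, hp, hwp⟩ := exists_pre hw (v := 2 * v' - 1)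
        (by simp only [Set.mem_Icc]; omega)
      simp only [Set.mem_Icc] at hp
      have hpodd : p % 2 = 1 := by
        by_contra hpe
        have hq0 : 1 ≤ p / 2 ∧ p / 2 ≤ m := by omega
        obtain ⟨ho, he⟩ := hst (p / 2) hq0.1 hq0.2
        rw [Nat.odd_iff] at ho
        have hpp : 2 * (p / 2) = p := by omega
        rw [hpp] at ho he
        omega
      set q0 := (p + 1) / 2 with hq0def
      have hq0 : 1 ≤ q0 ∧ q0 ≤ m := by omega
      refine ⟨q0, by simp only [Set.mem_Icc]; omega, ?_⟩
      rw [dn_apply hq0.1 hq0.2, show 2 * q0 - 1 = p by omega, hwp]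
      omega
    · -- outside
      intro q hq
      simp only [Set.mem_Icc] at hq
      unfold dn
      rw [if_neg (by omega)]
  · -- descents
    intro j hj
    simp only [desF, Finset.mem_filter, Finset.mem_Ioo] at hj
    obtain ⟨⟨hj0, hjm⟩, hjlt⟩ := hj
    rw [dn_apply (q := j + 1) (by omega) (by omega), dn_apply (q := j) (by omega) (by omega)]
      at hjlt
    have ho1 := (hst j (by omega) (by omega)).1
    have ho2 := (hst (j + 1) (by omega) (by omega)).1
    rw [Nat.odd_iff] at ho1 ho2
    have hlt : w (2 * (j + 1) - 1) < w (2 * j - 1) := by omega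
    have he := (hst j (by omega) (by omega)).2
    have hmem : 2 * j ∈ desF (2 * m) w := by
      simp only [desF, Finset.mem_filter, Finset.mem_Ioo]
      refine ⟨⟨by omega, by omega⟩, ?_⟩
      rw [show 2 * j + 1 = 2 * (j + 1) - 1 by omega]
      omega
    rw [Finset.mem_image]
    exact ⟨2 * j, hdes hmem, by omega⟩

/-- backward direction of the bijection -/
lemma up_mem (hu : u ∈ PermsA m) (hdes : desF m u ⊆ S.image (· / 2))
    (heven : ∀ s ∈ S, s % 2 = 0) :
    up m u ∈ PermsA (2 * m) ∧ desF (2 * m) (up m u) ⊆ S ∧ spl (2 * m) m S (up m u) = ∅ := by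
  have huv : ∀ q, 1 ≤ q → q ≤ m → 1 ≤ u q ∧ u q ≤ m := by
    intro q h1 h2
    have := hu.1.mapsTo (by simp only [Set.mem_Icc]; omega : q ∈ Set.Icc 1 m)
    simpa only [Set.mem_Icc] using this
  have hperm : up m u ∈ PermsA (2 * m) := by
    refine ⟨⟨?_, ?_, ?_⟩, ?_⟩
    · intro p hp
      simp only [Set.mem_Icc] at hp ⊢
      rcases Nat.mod_two_eq_zero_or_one p with hpe | hpo
      · rw [show p = 2 * (p / 2) by omega, up_even (by omega) (by omega)]
        have := huv (p / 2) (by omega) (by omega)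
        omega
      · rw [show p = 2 * ((p + 1) / 2) - 1 by omega, up_odd (by omega) (by omega)]
        have := huv ((p + 1) / 2) (by omega) (by omega)
        omega
    · intro p hp p' hp' heq
      simp only [Set.mem_Icc] at hp hp'
      have hinj : ∀ q q', 1 ≤ q → q ≤ m → 1 ≤ q' → q' ≤ m → u q = u q' → q = q' := by
        intro q q' a b c d h
        exact hu.1.injOn (by simp only [Set.mem_Icc]; omega)
          (by simp only [Set.mem_Icc]; omega) h
      rcases Nat.mod_two_eq_zero_or_one p with hpe | hpo <;>
        rcases Nat.mod_two_eq_zero_or_one p' with hpe' | hpo'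
      · rw [show p = 2 * (p / 2) by omega, up_even (by omega) (by omega),
          show p' = 2 * (p' / 2) by omega, up_even (by omega) (by omega)] at heq
        have := hinj (p / 2) (p' / 2) (by omega) (by omega) (by omega) (by omega) (by omega)
        omega
      · rw [show p = 2 * (p / 2) by omega, up_even (by omega) (by omega),
          show p' = 2 * ((p' + 1) / 2) - 1 by omega, up_odd (by omega) (by omega)] at heq
        have h1 := huv (p / 2) (by omega) (by omega)
        have h2 := huv ((p' + 1) / 2) (by omega) (by omega)
        omega
      · rw [show p = 2 * ((p + 1) / 2) - 1 by omega, up_odd (by omega) (by omega),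
          show p' = 2 * (p' / 2) by omega, up_even (by omega) (by omega)] at heq
        have h1 := huv ((p + 1) / 2) (by omega) (by omega)
        have h2 := huv (p' / 2) (by omega) (by omega)
        omega
      · rw [show p = 2 * ((p + 1) / 2) - 1 by omega, up_odd (by omega) (by omega),
          show p' = 2 * ((p' + 1) / 2) - 1 by omega, up_odd (by omega) (by omega)] at heq
        have h1 := huv ((p + 1) / 2) (by omega) (by omega)
        have h2 := huv ((p' + 1) / 2) (by omega) (by omega)
        have := hinj ((p + 1) / 2) ((p' + 1) / 2) (by omega) (by omega) (by omega) (by omega)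
          (by omega)
        omega
    · intro v hv
      simp only [Set.mem_Icc] at hv
      rcases Nat.mod_two_eq_zero_or_one v with hve | hvo
      · obtain ⟨q, hq, huq⟩ := exists_pre hu (v := v / 2)
          (by simp only [Set.mem_Icc]; omega)
        simp only [Set.mem_Icc] at hq
        refine ⟨2 * q, by simp only [Set.mem_Icc]; omega, ?_⟩
        rw [up_even hq.1 hq.2, huq]
        omega
      · obtain ⟨q, hq, huq⟩ := exists_pre hu (v := (v + 1) / 2)
          (by simp only [Set.mem_Icc]; omega)
        simp only [Set.mem_Icc] at hq
        refine ⟨2 * q - 1, by simp only [Set.mem_Icc]; omega, ?_⟩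
        rw [up_odd hq.1 hq.2, huq]
        omega
    · intro p hp
      simp only [Set.mem_Icc] at hp
      unfold up
      rw [if_neg (by omega)]
  refine ⟨hperm, ?_, ?_⟩
  · -- descents
    intro j hj
    simp only [desF, Finset.mem_filter, Finset.mem_Ioo] at hj
    obtain ⟨⟨hj0, hjn⟩, hjlt⟩ := hj
    rcases Nat.mod_two_eq_zero_or_one j with hje | hjo
    · -- j even, j = 2q
      set q := j / 2 with hqdef
      have hq : 1 ≤ q ∧ q ≤ m - 1 := by omega
      rw [show j = 2 * q by omega, show 2 * q + 1 = 2 * (q + 1) - 1 by omega,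
        up_odd (by omega) (by omega), up_even (by omega) (by omega)] at hjlt
      have h1 := huv q (by omega) (by omega)
      have h2 := huv (q + 1) (by omega) (by omega)
      have hne : u (q + 1) ≠ u q := by
        intro h
        have := hu.1.injOn (by simp only [Set.mem_Icc]; omega : q + 1 ∈ Set.Icc 1 m)
          (by simp only [Set.mem_Icc]; omega : q ∈ Set.Icc 1 m) h
        omega
      have hqdes : q ∈ desF m u := by
        simp only [desF, Finset.mem_filter, Finset.mem_Ioo]
        exact ⟨⟨by omega, by omega⟩, by omega⟩
      have := hdes hqdes
      rw [Finset.mem_image] at this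
      obtain ⟨s, hsS, hsq⟩ := this
      have := heven s hsS
      have : s = j := by omega
      rwa [← this]
    · -- j odd: no descent possible
      set q := (j + 1) / 2 with hqdef
      have hq : 1 ≤ q ∧ q ≤ m := by omega
      rw [show j = 2 * q - 1 by omega, show 2 * q - 1 + 1 = 2 * q by omega,
        up_even (by omega) (by omega), up_odd (by omega) (by omega)] at hjlt
      have := huv q (by omega) (by omega)
      omega
  · -- no split pairs
    rw [Finset.eq_empty_iff_forall_notMem]
    intro i hi
    unfold spl at hi
    rw [Finset.mem_filter, Finset.mem_Icc] at hi
    obtain ⟨⟨hi1, him⟩, hsp⟩ := hi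
    obtain ⟨q, hq, huq⟩ := exists_pre hu (v := i) (by simp only [Set.mem_Icc]; omega)
    simp only [Set.mem_Icc] at hq
    have he1 : up m u (2 * q - 1) = 2 * i - 1 := by rw [up_odd hq.1 hq.2, huq]
    have he2 : up m u (2 * q) = 2 * i := by rw [up_even hq.1 hq.2, huq]
    apply hsp
    show blk S (invw (2 * m) (up m u) (2 * i - 1)) = blk S (invw (2 * m) (up m u) (2 * i))
    rw [invw_uniq hperm (by simp only [Set.mem_Icc]; omega) he1,
      invw_uniq hperm (by simp only [Set.mem_Icc]; omega) he2]
    have : 2 * q - 1 ∉ S := by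
      intro hmem
      have := heven _ hmem
      omega
    have := blk_succ_eq_of_not_mem (S := S) this
    rw [show 2 * q - 1 + 1 = 2 * q by omega] at this
    omega

lemma up_dn (hw : w ∈ PermsA (2 * m)) (hdes : desF (2 * m) w ⊆ S)
    (hfix : spl (2 * m) m S w = ∅) : up m (dn m w) = w := by
  have hst := struct hw hdes rfl hfix
  funext p
  by_cases hp : 1 ≤ p ∧ p ≤ 2 * m
  · rcases Nat.mod_two_eq_zero_or_one p with hpe | hpo
    · set q := p / 2 with hqdef
      have hq : 1 ≤ q ∧ q ≤ m := by omega
      obtain ⟨ho, he⟩ := hst q hq.1 hq.2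
      rw [Nat.odd_iff] at ho
      rw [show p = 2 * q by omega, up_even hq.1 hq.2, dn_apply hq.1 hq.2]
      omega
    · set q := (p + 1) / 2 with hqdef
      have hq : 1 ≤ q ∧ q ≤ m := by omega
      obtain ⟨ho, -⟩ := hst q hq.1 hq.2
      rw [Nat.odd_iff] at ho
      rw [show p = 2 * q - 1 by omega, up_odd hq.1 hq.2, dn_apply hq.1 hq.2]
      omega
  · unfold up
    rw [if_neg hp, hw.2 p (by simp only [Set.mem_Icc]; omega)]

lemma dn_up (hu : u ∈ PermsA m) : dn m (up m u) = u := by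
  funext q
  by_cases hq : 1 ≤ q ∧ q ≤ m
  · rw [dn_apply hq.1 hq.2, up_odd hq.1 hq.2]
    have := hu.1.mapsTo (by simp only [Set.mem_Icc]; omega : q ∈ Set.Icc 1 m)
    simp only [Set.mem_Icc] at this
    omega
  · unfold dn
    rw [if_neg hq, hu.2 q (by simp only [Set.mem_Icc]; omega)]

lemma card_fix_eq (heven : ∀ s ∈ S, s % 2 = 0) :
    (((permsF (2 * m)).filter fun w => desF (2 * m) w ⊆ S).filter
        fun w => spl (2 * m) m S w = ∅).card
      = ((permsF m).filter fun v => desF m v ⊆ S.image (· / 2)).card := by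
  apply Finset.card_bij' (fun w _ => dn m w) (fun u _ => up m u)
  · intro w hwmem
    rw [Finset.mem_filter, Finset.mem_filter, mem_permsF] at hwmem
    obtain ⟨⟨hw, hdes⟩, hfix⟩ := hwmem
    obtain ⟨h1, h2⟩ := dn_mem hw hdes hfix
    rw [Finset.mem_filter, mem_permsF]
    exact ⟨h1, h2⟩
  · intro u humem
    rw [Finset.mem_filter, mem_permsF] at humem
    obtain ⟨hu, hdes⟩ := humem
    obtain ⟨h1, h2, h3⟩ := up_mem hu hdes heven
    rw [Finset.mem_filter, Finset.mem_filter, mem_permsF]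
    exact ⟨⟨h1, h2⟩, h3⟩
  · intro w hwmem
    rw [Finset.mem_filter, Finset.mem_filter, mem_permsF] at hwmem
    obtain ⟨⟨hw, hdes⟩, hfix⟩ := hwmem
    exact up_dn hw hdes hfix
  · intro u humem
    rw [Finset.mem_filter, mem_permsF] at humem
    exact dn_up humem.1

end bij

lemma evenX (d : ℕ) : ∀ S : Finset ℕ, S ⊆ Finset.Ioo 0 (2 ^ d) → S.Nonempty →
    Even (((permsF (2 ^ d)).filter fun w => desF (2 ^ d) w ⊆ S).card) := by
  induction d with
  | zero =>
    intro S hsub hne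
    obtain ⟨s, hs⟩ := hne
    have := hsub hs
    rw [Finset.mem_Ioo, pow_zero] at this
    omega
  | succ d ih =>
    intro S hsub hne
    have hn : (2:ℕ) ^ (d + 1) = 2 * 2 ^ d := by ring
    rw [hn] at hsub ⊢
    have hmod := card_X_modEq_fix (n := 2 * 2 ^ d) (m := 2 ^ d) (S := S) rfl
    by_cases hodd : ∃ s ∈ S, s % 2 = 1
    · obtain ⟨s, hsS, hso⟩ := hodd
      rw [fix_empty_of_odd hsub rfl hsS hso, Finset.card_empty] at hmod
      rw [Nat.even_iff]
      simpa [Nat.ModEq] using hmod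
    · push_neg at hodd
      have heven : ∀ s ∈ S, s % 2 = 0 := fun s hs => by have := hodd s hs; omega
      have hceq := card_fix_eq (m := 2 ^ d) (S := S) heven
      have hS' : S.image (· / 2) ⊆ Finset.Ioo 0 (2 ^ d) := by
        intro t ht
        rw [Finset.mem_image] at ht
        obtain ⟨s, hsS, rfl⟩ := ht
        have h1 := hsub hsS
        rw [Finset.mem_Ioo] at h1 ⊢
        have := heven s hsS
        omega
      have hne' : (S.image (· / 2)).Nonempty := hne.image _
      have hIH := ih (S.image (· / 2)) hS' hne'
      rw [hceq] at hmod
      rw [Nat.even_iff] at hIH ⊢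
      unfold Nat.ModEq at hmod
      omega

lemma odd_Y {d : ℕ} : ∀ S : Finset ℕ, S ⊆ Finset.Ioo 0 (2^d) →
    Odd (((permsF (2^d)).filter fun w => desF (2^d) w = S).card) := by
  intro S
  induction S using Finset.strongInduction with
  | _ S ih =>
    intro hsub
    rcases S.eq_empty_or_nonempty with rfl | hne
    · rw [card_X_empty]; exact odd_one
    · rw [odd_iff_zmod]
      have hsum := congrArg (Nat.cast : ℕ → ZMod 2) (card_X_eq_sum (n := 2^d) S)
      push_cast at hsum
      rw [even_iff_zmod.1 (evenX d S hsub hne)] at hsum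
      have hSmem : S ∈ S.powerset := Finset.mem_powerset_self S
      rw [← Finset.sum_erase_add _ _ hSmem] at hsum
      have hones : ∀ T ∈ S.powerset.erase S,
          ((((permsF (2^d)).filter fun w => desF (2^d) w = T).card : ℕ) : ZMod 2) = 1 := by
        intro T hT
        rw [Finset.mem_erase, Finset.mem_powerset] at hT
        exact odd_iff_zmod.1 (ih T (lt_of_le_of_ne hT.2 hT.1) (hT.2.trans hsub))
      rw [Finset.sum_congr rfl hones, Finset.sum_const, Finset.card_erase_of_mem hSmem,
        Finset.card_powerset, nsmul_eq_mul, mul_one] at hsum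
      have hodd : Odd (2 ^ S.card - 1) := by
        have h1 : 1 ≤ S.card := Finset.card_pos.2 hne
        have h2 : (2:ℕ) ^ S.card = 2 * 2 ^ (S.card - 1) := by
          conv_lhs => rw [show S.card = (S.card - 1) + 1 by omega]
          ring
        have h3 : 1 ≤ 2 ^ (S.card - 1) := Nat.one_le_two_pow
        rw [Nat.odd_iff]
        omega
      rw [odd_iff_zmod.1 hodd] at hsum
      revert hsum
      generalize (((((permsF (2^d)).filter fun w => desF (2^d) w = S).card : ℕ)) : ZMod 2) = y
      revert y
      decide

/-- If n ≥ 2 is a power of 2, then every ribbon number r_α with α ⊨ n is odd. -/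
theorem ribbonA_odd_of_two_pow {n : ℕ} (hn : 2 ≤ n) (hpow : ∃ d : ℕ, n = 2 ^ d)
    (α : Composition n) : Odd (ribbonA α) := by
  obtain ⟨d, rfl⟩ := hpow
  set S : Finset ℕ := (Finset.Ioo 0 α.length).image α.sizeUpTo with hS
  have hcoe : (S : Set ℕ) = DsetA α := by
    ext m
    simp only [hS, Finset.coe_image, Set.mem_image, Finset.coe_Ioo, Set.mem_Ioo, DsetA,
      Set.mem_setOf_eq]
    constructor
    · rintro ⟨i, ⟨h1, h2⟩, rfl⟩; exact ⟨i, h1, h2, rfl⟩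
    · rintro ⟨i, h1, h2, rfl⟩; exact ⟨i, ⟨h1, h2⟩, rfl⟩
  have hsub : S ⊆ Finset.Ioo 0 (2^d) := by
    intro m hm
    simp only [hS, Finset.mem_image, Finset.mem_Ioo] at hm
    obtain ⟨i, ⟨h1, h2⟩, rfl⟩ := hm
    rw [Finset.mem_Ioo]
    constructor
    · have h0 : α.sizeUpTo 0 < α.sizeUpTo 1 := α.sizeUpTo_strict_mono (by omega)
      have := α.monotone_sizeUpTo (show 1 ≤ i by omega)
      simp [Composition.sizeUpTo_zero] at h0
      omega
    · have := α.sizeUpTo_strict_mono h2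
      have h2' := α.sizeUpTo_le (i + 1)
      omega
  have hset : {w ∈ PermsA (2^d) | DesA (2^d) w = DsetA α}
      = ↑((permsF (2^d)).filter fun w => desF (2^d) w = S) := by
    ext w
    simp only [Set.mem_setOf_eq, Finset.coe_filter, mem_permsF]
    constructor
    · rintro ⟨h1, h2⟩
      refine ⟨h1, ?_⟩
      apply Finset.coe_injective
      rw [coe_desF, hcoe, h2]
    · rintro ⟨h1, h2⟩
      refine ⟨h1, ?_⟩
      rw [← coe_desF, ← hcoe, h2]
  rw [ribbonA, hset, Set.ncard_coe_finset]
  exact odd_Y S hsub
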